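/- For all sufficiently large natural numbers d, the degree-d polynomial L_d has d distinct complex roots; that is, the set of complex zeros of L_d has cardinality d. -/

import Mathlib

/-!
By Vandermonde's identity `L_d(t) = ∑ₖ 2ᵏ C(d,k) binom(t,k)`, which yields the three-term
recurrence `(d+2) L_{d+2}(t) = (2t+1) L_{d+1}(t) + (d+1) L_d(t)`. On the line `Re t = -1/2` it
becomes `L_d(-1/2 + iy) = iᵈ P_d(y)` for real polynomials with
`(n+2) P_{n+2}(y) = 2y P_{n+1}(y) - (n+1) P_n(y)`. As for orthogonal polynomials, this forces the
zeros of `P_n` to be real, simple and interlaced with those of `P_{n+1}`: at a zero of `P_{n+1}`,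
`P_{n+2}` has the sign opposite to `P_n`, so the intermediate value theorem puts a zero of `P_{n+2}`
in each gap between consecutive zeros of `P_{n+1}` and beyond each end. So `L_d` has `d` distinct
zeros on that line, and no others since its degree is `d`.
-/

/-- `binom(y, d) = (∏_{k=0}^{d-1} (y - k)) / d!` for complex `y`. -/
noncomputable def cbinom (y : ℂ) (d : ℕ) : ℂ :=
  (∏ k ∈ Finset.range d, (y - k)) / (Nat.factorial d : ℂ)

/-- The Ehrhart polynomial of the `d`-dimensional cross-polytope. -/
noncomputable def Lpoly (d : ℕ) (x : ℂ) : ℂ :=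
  ∑ j ∈ Finset.range (d + 1), (Nat.choose d j : ℂ) * cbinom ((d : ℂ) - (j : ℂ) + x) d

open Finset Polynomial Filter

theorem Nat.sum_choose_mul_choose_sub_sub {d k : ℕ} (hk : k ≤ d) :
    ∑ j ∈ range (d + 1), d.choose j * (d - j).choose (d - k) = 2 ^ k * d.choose k := by
  have hterm : ∀ j ∈ range (d + 1),
      d.choose j * (d - j).choose (d - k) = d.choose k * k.choose j := by
    intro j hj
    rcases le_or_gt j k with hjk | hkj
    · rw [choose_mul hjk, choose_symm_of_eq_add (by omega : d - j = (d - k) + (k - j))]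
    · have : d - j < d - k := by simp only [mem_range] at hj; omega
      simp [choose_eq_zero_of_lt hkj, choose_eq_zero_of_lt this]
  rw [sum_congr rfl hterm, ← mul_sum, mul_comm, ← sum_range_choose k]
  refine congrArg (· * _) (sum_subset (range_subset_range.2 (by omega)) fun j _ hj => ?_).symm
  exact choose_eq_zero_of_lt (by simpa using hj)

theorem Nat.add_two_mul_choose_add_two (d k : ℕ) :
    (d + 2) * (d + 2).choose k
      = k * (d + 1).choose (k - 1) + (2 * k + 1) * (d + 1).choose k + (d + 1) * d.choose k := by
  cases k with
  | zero =>
    simp only [choose_zero_right]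
    ring
  | succ k =>
    have pascal₂ : (d + 2).choose (k + 1) = (d + 1).choose k + (d + 1).choose (k + 1) :=
      choose_succ_succ' (d + 1) k
    have pascal₁ := choose_succ_succ' d k
    have absorb₂ : (d + 2) * (d + 1).choose k = (d + 2).choose (k + 1) * (k + 1) :=
      add_one_mul_choose_eq (d + 1) k
    have absorb₁ := add_one_mul_choose_eq d k
    simp only [add_tsub_cancel_right]
    linear_combination (d + k + 3) * pascal₂ + (d + 1) * pascal₁ + absorb₂ + absorb₁

theorem Ring.choose_eq_descPochhammer_eval_div {K : Type*} [Field K] [CharZero K] (a : K)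
    (n : ℕ) : Ring.choose a n = (descPochhammer K n).eval a / n.factorial := by
  rw [Ring.choose_eq_smul, smul_eq_mul, ← aeval_eq_smeval, ← descPochhammer_map (algebraMap ℤ K),
    aeval_def, eval_map, inv_mul_eq_div]

theorem Ring.choose_add_natCast {R : Type*} [CommRing R] [BinomialRing R] (r : R) (n d : ℕ) :
    Ring.choose (r + n) d = ∑ k ∈ range (d + 1), (n.choose (d - k) : R) * Ring.choose r k := by
  rw [Ring.add_choose_eq d (Commute.all _ _), Nat.sum_antidiagonal_eq_sum_range_succ
    (fun a b => Ring.choose r a * Ring.choose (n : R) b)]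
  refine sum_congr rfl fun k _ => ?_
  rw [Ring.choose_natCast, mul_comm]

theorem Ring.mul_choose {R : Type*} [CommRing R] [BinomialRing R] (r : R) (k : ℕ) :
    r * Ring.choose r k = (k + 1) * Ring.choose r (k + 1) + k * Ring.choose r k := by
  have h := Ring.choose_smul_choose r (Nat.le_add_right k 1)
  rw [Nat.choose_succ_self_right, Nat.add_sub_cancel_left, Ring.choose_one_right, nsmul_eq_mul] at h
  push_cast at h
  linear_combination -h

namespace Polynomial

theorem eq_C_leadingCoeff_mul_prod_X_sub_C {K : Type*} [Field K] {m : ℕ} {p : K[X]}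
    (hdeg : p.natDegree ≤ m) {s : Fin m → K} (hs : Function.Injective s)
    (hroot : ∀ i, p.IsRoot (s i)) : p = C p.leadingCoeff * ∏ i, (X - C (s i)) :=
  eq_leadingCoeff_mul_of_monic_of_dvd_of_natDegree_le
    (monic_prod_of_monic _ _ fun i _ => monic_X_sub_C (s i))
    (Fintype.prod_dvd_of_coprime (pairwise_coprime_X_sub_C hs) fun i => dvd_iff_isRoot.2 (hroot i))
    (by simpa using hdeg)

theorem neg_one_pow_mul_eval_pos {m : ℕ} {p : ℝ[X]} (hdeg : p.natDegree ≤ m)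
    (hlc : 0 < p.leadingCoeff) {s : Fin m → ℝ} (hs : Function.Injective s)
    (hroot : ∀ i, p.IsRoot (s i)) {k : ℕ} {x : ℝ} (hbelow : ∀ i : Fin m, (i : ℕ) < k → s i < x)
    (habove : ∀ i : Fin m, k ≤ i → x < s i) : 0 < (-1) ^ (m - k) * p.eval x := by
  set below := univ.filter fun i : Fin m => (i : ℕ) < k
  set above := univ.filter fun i : Fin m => ¬ (i : ℕ) < k
  have hcard : #above = m - k := by
    have := card_filter_add_card_filter_not (s := univ) fun i : Fin m => (i : ℕ) < k
    rw [Fin.card_filter_val_lt, card_univ, Fintype.card_fin] at this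
    change min m k + #above = m at this
    omega
  have hbelow_pos : 0 < ∏ i ∈ below, (x - s i) :=
    prod_pos fun i hi => sub_pos.2 (hbelow i (mem_filter.1 hi).2)
  have habove_pos : 0 < ∏ i ∈ above, (s i - x) :=
    prod_pos fun i hi => sub_pos.2 (habove i (not_lt.1 (mem_filter.1 hi).2))
  have habove_eq : ∏ i ∈ above, (x - s i) = (-1) ^ (m - k) * ∏ i ∈ above, (s i - x) := by
    rw [← hcard, ← prod_neg]
    simp only [neg_sub]
  have hsign : ((-1 : ℝ) ^ (m - k)) * (-1) ^ (m - k) = 1 := by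
    rw [← mul_pow, neg_one_mul, neg_neg, one_pow]
  rw [eq_C_leadingCoeff_mul_prod_X_sub_C hdeg hs hroot, eval_mul, eval_C, eval_prod,
    ← prod_filter_mul_prod_filter_not univ fun i : Fin m => (i : ℕ) < k]
  simp only [eval_sub, eval_X, eval_C]
  rw [habove_eq]
  calc (0 : ℝ) < p.leadingCoeff * ((∏ i ∈ below, (x - s i)) * ∏ i ∈ above, (s i - x)) := by
        positivity
    _ = _ := by
        linear_combination (-(p.leadingCoeff * ((∏ i ∈ below, (x - s i))
          * ∏ i ∈ above, (s i - x)))) * hsign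

theorem tendsto_neg_one_pow_mul_eval_atBot {p : ℝ[X]} (hdeg : 0 < p.natDegree)
    (hlc : 0 < p.leadingCoeff) :
    Tendsto (fun x => (-1) ^ p.natDegree * p.eval x) atBot atTop := by
  set q := C ((-1) ^ p.natDegree) * p.comp (-X)
  have hsign : ((-1 : ℝ) ^ p.natDegree) * (-1) ^ p.natDegree = 1 := by
    rw [← mul_pow, neg_one_mul, neg_neg, one_pow]
  have hqdeg : 0 < q.degree := by
    refine natDegree_pos_iff_degree_pos.1 ?_
    rwa [natDegree_C_mul (by simp), natDegree_comp, natDegree_neg, natDegree_X, mul_one]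
  have hqlc : 0 ≤ q.leadingCoeff := by
    rw [leadingCoeff_mul, leadingCoeff_C, comp_neg_X_leadingCoeff_eq, ← mul_assoc, hsign, one_mul]
    exact hlc.le
  refine ((q.tendsto_atTop_of_leadingCoeff_nonneg hqdeg hqlc).comp tendsto_neg_atBot_atTop).congr
    fun x => ?_
  simp [q]

theorem exists_isRoot_mem_Ioo {p : ℝ[X]} {a b ε : ℝ} (hab : a ≤ b) (ha : ε * p.eval a < 0)
    (hb : 0 < ε * p.eval b) : ∃ c ∈ Set.Ioo a b, p.IsRoot c := by
  obtain ⟨c, hc, hc0⟩ := intermediate_value_Ioo hab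
    (p.continuous.continuousOn.const_smul ε : ContinuousOn (fun x => ε * p.eval x) _) ⟨ha, hb⟩
  have hε : ε ≠ 0 := by rintro rfl; simp at hb
  exact ⟨c, hc, (mul_eq_zero.1 hc0).resolve_left hε⟩

theorem exists_roots_interlacing {m : ℕ} {p : ℝ[X]} (hdeg : p.natDegree = m + 1)
    (hlc : 0 < p.leadingCoeff) {s : Fin m → ℝ} (hs : StrictMono s)
    (hsign : ∀ j : Fin m, 0 < (-1) ^ (m - j) * p.eval (s j)) :
    ∃ t : Fin (m + 1) → ℝ, StrictMono t ∧ (∀ j, p.IsRoot (t j)) ∧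
      ∀ j : Fin m, t j.castSucc < s j ∧ s j < t j.succ := by
  have hdeg_pos : 0 < p.natDegree := by omega
  obtain ⟨b, hsb, hb⟩ : ∃ b, (∀ i, s i < b) ∧ 0 < p.eval b :=
    ((eventually_all.2 fun i => eventually_gt_atTop (s i)).and
      ((p.tendsto_atTop_of_leadingCoeff_nonneg (natDegree_pos_iff_degree_pos.1 hdeg_pos)
        hlc.le).eventually_gt_atTop 0)).exists
  obtain ⟨a, has, hab, ha⟩ : ∃ a, (∀ i, a < s i) ∧ a < b ∧ 0 < (-1) ^ (m + 1) * p.eval a :=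
    ((eventually_all.2 fun i => eventually_lt_atBot (s i)).and ((eventually_lt_atBot b).and
      (hdeg ▸ (tendsto_neg_one_pow_mul_eval_atBot hdeg_pos hlc).eventually_gt_atTop 0))).exists
  set u : Fin (m + 2) → ℝ := Fin.cons a (Fin.snoc s b)
  have hu_mono : StrictMono u := by
    refine Fin.strictMono_cons.2 ⟨fun j => ?_, ?_⟩
    · induction j using Fin.lastCases <;> simp [has, hab]
    · rw [← Fin.insertNth_last', Fin.strictMono_insertNth_iff]
      exact ⟨hs, fun i _ => hsb i, fun i h => absurd h (not_le.2 (Fin.castSucc_lt_last i))⟩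
  have hu_sign : ∀ k : Fin (m + 2), 0 < (-1) ^ (m + 1 - k) * p.eval (u k) := by
    intro k
    induction k using Fin.cases with
    | zero => simpa [u] using ha
    | succ j =>
      induction j using Fin.lastCases with
      | last => simpa [u] using hb
      | cast i => simpa [u, Nat.add_sub_add_right] using hsign i
  have hu_s : ∀ j : Fin m, u j.castSucc.succ = s j := fun j => by simp [u]
  have hroot : ∀ k : Fin (m + 1), ∃ c ∈ Set.Ioo (u k.castSucc) (u k.succ), p.IsRoot c := by
    intro k
    have h₀ := hu_sign k.castSucc
    have h₁ := hu_sign k.succ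
    rw [Fin.val_castSucc, (by omega : m + 1 - k = m - k + 1), pow_succ] at h₀
    rw [Fin.val_succ, (by omega : m + 1 - (k + 1) = m - k)] at h₁
    exact exists_isRoot_mem_Ioo (hu_mono Fin.castSucc_lt_succ).le (by linarith) h₁
  choose t ht hroot using hroot
  refine ⟨t, Fin.strictMono_iff_lt_succ.2 fun k => ?_, hroot, fun j => ?_⟩
  · exact (ht k.castSucc).2.trans (Fin.succ_castSucc k ▸ ht k.succ).1
  · exact ⟨hu_s j ▸ (ht j.castSucc).2, hu_s j ▸ Fin.succ_castSucc j ▸ (ht j.succ).1⟩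

theorem exists_strictMono_roots_of_recurrence {p q : ℕ → ℝ[X]} {c : ℕ → ℝ}
    (hdeg : ∀ n, (p n).natDegree = n) (hlc : ∀ n, 0 < (p n).leadingCoeff) (hc : ∀ n, 0 < c n)
    (hrec : ∀ n, p (n + 2) = q n * p (n + 1) - C (c n) * p n) (n : ℕ) :
    ∃ s : Fin n → ℝ, StrictMono s ∧ (∀ j, (p n).IsRoot (s j)) ∧
      ∀ j : Fin n, 0 < (-1) ^ (n - j) * (p (n + 1)).eval (s j) := by
  induction n with
  | zero => exact ⟨finZeroElim, fun i => i.elim0, finZeroElim, finZeroElim⟩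
  | succ n ih =>
    obtain ⟨s, hs, hroot, hsign⟩ := ih
    obtain ⟨t, ht, htroot, hst⟩ := exists_roots_interlacing (hdeg (n + 1)) (hlc (n + 1)) hs hsign
    refine ⟨t, ht, htroot, fun j => ?_⟩
    have hnext : (p (n + 2)).eval (t j) = -c n * (p n).eval (t j) := by
      simp [hrec, (htroot j).eq_zero]
    have hprev : 0 < (-1) ^ (n - j) * (p n).eval (t j) :=
      neg_one_pow_mul_eval_pos (hdeg n).le (hlc n) hs.injective hroot
        (fun i hi => (hst i).2.trans_le (ht.monotone (Fin.le_iff_val_le_val.2 (by simpa using hi))))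
        (fun i hi => (ht.monotone (Fin.le_iff_val_le_val.2 (by simpa using hi))).trans_lt (hst i).1)
    rw [hnext, (by omega : n + 1 - j = n - j + 1), pow_succ]
    calc 0 < c n * ((-1) ^ (n - j) * (p n).eval (t j)) := mul_pos (hc n) hprev
      _ = _ := by ring

theorem ncard_setOf_eval_eq_zero {R : Type*} [CommRing R] [IsDomain R] {p : R[X]} (hp : p ≠ 0)
    {n : ℕ} (hdeg : p.natDegree ≤ n) {f : Fin n → R} (hf : Function.Injective f)
    (hroot : ∀ i, p.IsRoot (f i)) : {z | p.eval z = 0}.ncard = n := by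
  classical
  have hset : {z | p.eval z = 0} = ↑p.roots.toFinset := by
    ext z
    simp [mem_roots hp]
  rw [hset, Set.ncard_coe_finset]
  refine le_antisymm ((Multiset.toFinset_card_le _).trans ((card_roots' p).trans hdeg)) ?_
  calc n = #(univ.image f) := by rw [card_image_of_injective _ hf, card_univ, Fintype.card_fin]
    _ ≤ #p.roots.toFinset := card_le_card fun z hz => by
      obtain ⟨i, -, rfl⟩ := mem_image.1 hz
      exact Multiset.mem_toFinset.2 ((mem_roots hp).2 (hroot i))

end Polynomial

-- The Meixner–Pollaczek polynomials `P_n^{(1/2)}(y; π/2)`.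
noncomputable def meixnerPollaczek : ℕ → ℝ[X]
  | 0 => 1
  | 1 => C 2 * X
  | n + 2 => C (2 / (n + 2) : ℝ) * X * meixnerPollaczek (n + 1)
      - C ((n + 1) / (n + 2) : ℝ) * meixnerPollaczek n

theorem meixnerPollaczek_add_two (n : ℕ) :
    meixnerPollaczek (n + 2) = C (2 / (n + 2) : ℝ) * X * meixnerPollaczek (n + 1)
      - C ((n + 1) / (n + 2) : ℝ) * meixnerPollaczek n :=
  rfl

theorem natDegree_meixnerPollaczek_and_leadingCoeff_pos (n : ℕ) :
    (meixnerPollaczek n).natDegree = n ∧ 0 < (meixnerPollaczek n).leadingCoeff := by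
  induction n using Nat.twoStepInduction with
  | zero => simp [meixnerPollaczek]
  | one => simp [meixnerPollaczek]
  | more n ih₀ ih₁ =>
    have ha : (2 / (n + 2) : ℝ) ≠ 0 := by positivity
    have hlead : (C (2 / (n + 2) : ℝ) * X * meixnerPollaczek (n + 1)).natDegree = n + 2 := by
      rw [natDegree_mul (by simp [ha]) (leadingCoeff_ne_zero.1 ih₁.2.ne'), natDegree_C_mul_X _ ha,
        ih₁.1]
      ring
    have hlower : (C ((n + 1) / (n + 2) : ℝ) * meixnerPollaczek n).natDegree < n + 2 :=
      (natDegree_C_mul_le _ _).trans_lt (by omega)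
    rw [meixnerPollaczek_add_two, natDegree_sub_eq_left_of_natDegree_lt (hlead ▸ hlower),
      leadingCoeff_sub_of_degree_lt (degree_lt_degree (hlead ▸ hlower)), hlead,
      leadingCoeff_mul, leadingCoeff_mul, leadingCoeff_C, leadingCoeff_X, mul_one]
    exact ⟨rfl, mul_pos (by positivity) ih₁.2⟩

theorem cbinom_eq_choose (y : ℂ) (d : ℕ) : cbinom y d = Ring.choose y d := by
  rw [Ring.choose_eq_descPochhammer_eval_div, descPochhammer_eval_eq_prod_range, cbinom]

theorem Lpoly_eq_sum_choose (d : ℕ) {N : ℕ} (hN : d < N) (t : ℂ) :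
    Lpoly d t = ∑ k ∈ range N, (2 ^ k * d.choose k : ℂ) * Ring.choose t k := by
  have hshift : ∀ j ∈ range (d + 1), (d : ℂ) - j + t = t + ((d - j : ℕ) : ℂ) := fun j hj => by
    rw [Nat.cast_sub (by simpa [Nat.lt_succ_iff] using hj)]; ring
  calc Lpoly d t
      = ∑ j ∈ range (d + 1), ∑ k ∈ range (d + 1),
          ((d.choose j * (d - j).choose (d - k) : ℕ) : ℂ) * Ring.choose t k := by
        refine sum_congr rfl fun j hj => ?_
        rw [cbinom_eq_choose, hshift j hj, Ring.choose_add_natCast, mul_sum]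
        simp only [Nat.cast_mul, mul_assoc]
    _ = ∑ k ∈ range (d + 1), (2 ^ k * d.choose k : ℂ) * Ring.choose t k := by
        rw [sum_comm]
        refine sum_congr rfl fun k hk => ?_
        rw [← sum_mul, ← Nat.cast_sum, Nat.sum_choose_mul_choose_sub_sub
          (by simpa [Nat.lt_succ_iff] using hk)]
        norm_cast
    _ = _ := by
        refine sum_subset (range_subset_range.2 hN) fun k _ hk => ?_
        simp [Nat.choose_eq_zero_of_lt (by simpa using hk : d < k)]

theorem Lpoly_zero (t : ℂ) : Lpoly 0 t = 1 := by
  simp [Lpoly_eq_sum_choose 0 zero_lt_one]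

theorem Lpoly_one (t : ℂ) : Lpoly 1 t = 2 * t + 1 := by
  rw [Lpoly_eq_sum_choose 1 (lt_add_one 1), sum_range_succ, sum_range_one,
    Ring.choose_zero_right, Ring.choose_one_right]
  simp only [Nat.choose_zero_right, Nat.choose_self, Nat.cast_one]
  ring

theorem Lpoly_add_two (d : ℕ) (t : ℂ) :
    (d + 2) * Lpoly (d + 2) t = (2 * t + 1) * Lpoly (d + 1) t + (d + 1) * Lpoly d t := by
  rw [Lpoly_eq_sum_choose (d + 2) (N := d + 3) (by omega),
    Lpoly_eq_sum_choose (d + 1) (N := d + 2) (by omega),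
    Lpoly_eq_sum_choose d (N := d + 3) (by omega)]
  have hmul : (2 * t + 1) * ∑ k ∈ range (d + 2), (2 ^ k * (d + 1).choose k : ℂ) * Ring.choose t k
      = ∑ k ∈ range (d + 3), (k * 2 ^ k * (d + 1).choose (k - 1) : ℂ) * Ring.choose t k
        + ∑ k ∈ range (d + 3), ((2 * k + 1) * 2 ^ k * (d + 1).choose k : ℂ) * Ring.choose t k := by
    rw [sum_range_succ' _ (d + 2), sum_range_succ _ (d + 2), mul_sum]
    simp only [Nat.choose_succ_self, Nat.cast_zero, mul_zero, zero_mul, add_zero]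
    rw [← sum_add_distrib]
    refine sum_congr rfl fun k _ => ?_
    rw [Nat.add_sub_cancel]
    push_cast
    linear_combination 2 ^ (k + 1) * ((d + 1).choose k : ℂ) * Ring.mul_choose t k
  rw [hmul, mul_sum, mul_sum, ← sum_add_distrib, ← sum_add_distrib]
  refine sum_congr rfl fun k _ => ?_
  have h := congrArg (Nat.cast : ℕ → ℂ) (Nat.add_two_mul_choose_add_two d k)
  push_cast at h
  linear_combination 2 ^ k * Ring.choose t k * h

theorem Lpoly_neg_half_add_I_mul (d : ℕ) (y : ℝ) :
    Lpoly d (-1 / 2 + Complex.I * y) = Complex.I ^ d * (meixnerPollaczek d).eval y := by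
  induction d using Nat.twoStepInduction with
  | zero => simp [Lpoly_zero, meixnerPollaczek]
  | one =>
    simp only [Lpoly_one, pow_one, meixnerPollaczek, eval_mul, eval_C, eval_X]
    push_cast
    ring
  | more n ih₀ ih₁ =>
    have hn : (n + 2 : ℂ) ≠ 0 := by exact_mod_cast (n + 1).succ_ne_zero
    apply mul_left_cancel₀ hn
    rw [Lpoly_add_two, ih₀, ih₁, meixnerPollaczek_add_two]
    simp only [eval_sub, eval_mul, eval_C, eval_X]
    push_cast
    field_simp
    linear_combination ((n + 1) * Complex.I ^ n * (((meixnerPollaczek n).eval y : ℝ) : ℂ))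
      * Complex.I_sq

noncomputable def Lpolynomial (d : ℕ) : ℂ[X] :=
  ∑ k ∈ range (d + 1), C (2 ^ k * d.choose k / k.factorial : ℂ) * descPochhammer ℂ k

theorem eval_Lpolynomial (d : ℕ) (z : ℂ) : (Lpolynomial d).eval z = Lpoly d z := by
  rw [Lpoly_eq_sum_choose d (lt_add_one d), Lpolynomial, eval_finsetSum]
  refine sum_congr rfl fun k _ => ?_
  rw [eval_mul, eval_C, Ring.choose_eq_descPochhammer_eval_div]
  ring

theorem natDegree_Lpolynomial_le (d : ℕ) : (Lpolynomial d).natDegree ≤ d :=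
  natDegree_sum_le_of_forall_le _ _ fun k hk => (natDegree_C_mul_le _ _).trans
    ((descPochhammer_natDegree ℂ k).trans_le (Nat.lt_succ_iff.1 (mem_range.1 hk)))

theorem Lpolynomial_ne_zero (d : ℕ) : Lpolynomial d ≠ 0 := by
  intro h
  have h0 := eval_Lpolynomial d 0
  rw [h, eval_zero, Lpoly_eq_sum_choose d (lt_add_one d)] at h0
  simp [Ring.choose_zero_ite] at h0

theorem ehrhart_roots_distinct :
    ∃ D : ℕ, ∀ d : ℕ, D ≤ d → {z : ℂ | Lpoly d z = 0}.ncard = d := by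
  refine ⟨0, fun d _ => ?_⟩
  obtain ⟨s, hs, hroot, -⟩ := exists_strictMono_roots_of_recurrence
    (fun n => (natDegree_meixnerPollaczek_and_leadingCoeff_pos n).1)
    (fun n => (natDegree_meixnerPollaczek_and_leadingCoeff_pos n).2)
    (c := fun n : ℕ => (n + 1) / (n + 2)) (fun n => by positivity) meixnerPollaczek_add_two d
  have hzeros : {z : ℂ | Lpoly d z = 0} = {z | (Lpolynomial d).eval z = 0} := by
    simp only [eval_Lpolynomial]
  rw [hzeros]
  refine ncard_setOf_eval_eq_zero (Lpolynomial_ne_zero d) (natDegree_Lpolynomial_le d)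
    (f := fun i => -1 / 2 + Complex.I * s i) (fun i j hij => hs.injective ?_) fun i => ?_
  · simpa using hij
  · rw [IsRoot, eval_Lpolynomial, Lpoly_neg_half_add_I_mul, (hroot i).eq_zero]
    simp
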